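/- Let q be a positive integer divisible by 4. Consider the assignment problem with couples with two hospitals H = {h, h'}; single interns s₁,…,s_{q/2+1} whose M-rows equal 1 at h and 0 at h'; single interns s'₁,…,s'_{q/2+1} whose M-rows equal 0 at h and 1 at h'; one couple c* whose members' M-rows equal 1/2 at h and 1/2 at h'; couples c₁,…,c_{q/4−1} whose members' M-rows equal 1 at h and 0 at h'; and couples c'₁,…,c'_{q/4−1} whose members' M-rows equal 0 at h and 1 at h'. Then both hospitals have capacity q, the problem belongs to the domain 𝒫^{S≥C}, and every convex combination {(λ^k, M^k)}_{k=1}^K of deterministic assignment matrices has approximation error at least 2/(q + 2). -/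

import Mathlib

open Finset

/-- `(S, C, H, M)` (with `I`, `H` types of interns and hospitals) is an assignment problem
with couples: `S` is the set of single interns, `C` the set of couples (ordered pairs of
members), every intern is a single or a member of a couple, members of couples are distinct
from each other, from the singles, and from members of other couples, `M ∈ [0,1]^{I×H}`,
each row of `M` sums to `1`, and both members of a couple have identical rows. -/
def IsCouplesProblem {I H : Type*} [Fintype I] [Fintype H]
    (S : Finset I) (C : Finset (I × I)) (M : I → H → ℝ) : Prop :=
  (∀ i : I, i ∈ S ∨ ∃ c ∈ C, i = c.1 ∨ i = c.2) ∧
  (∀ c ∈ C, c.1 ∉ S ∧ c.2 ∉ S ∧ c.1 ≠ c.2) ∧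
  (∀ c ∈ C, ∀ c' ∈ C, c ≠ c' →
    c.1 ≠ c'.1 ∧ c.1 ≠ c'.2 ∧ c.2 ≠ c'.1 ∧ c.2 ≠ c'.2) ∧
  (∀ (i : I) (h : H), 0 ≤ M i h ∧ M i h ≤ 1) ∧
  (∀ i : I, ∑ h : H, M i h = 1) ∧
  (∀ c ∈ C, ∀ h : H, M c.1 h = M c.2 h)

/-- `M'` is a deterministic assignment matrix with respect to the problem with couples `C`
and target matrix `M`: its entries are in `{0,1}`, rows sum to `1`, both members of each
couple have identical rows, and each column sum equals the capacity `q_h = ∑ i, M i h`. -/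
def IsDeterministicAssignment {I H : Type*} [Fintype I] [Fintype H]
    (C : Finset (I × I)) (M M' : I → H → ℝ) : Prop :=
  (∀ (i : I) (h : H), M' i h = 0 ∨ M' i h = 1) ∧
  (∀ i : I, ∑ h : H, M' i h = 1) ∧
  (∀ c ∈ C, ∀ h : H, M' c.1 h = M' c.2 h) ∧
  (∀ h : H, ∑ i : I, M' i h = ∑ i : I, M i h)


/-- Interns in the lower-bound example: singles `s₁, …, s_{q/2+1}` and
`s'₁, …, s'_{q/2+1}`, the couple `c*` (two members indexed by `Bool`), and couples
`c₁, …, c_{q/4−1}` and `c'₁, …, c'_{q/4−1}` (each with two members indexed by `Bool`). -/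
inductive ExIntern (q : ℕ) where
  | s (j : Fin (q / 2 + 1))
  | s' (j : Fin (q / 2 + 1))
  | cstar (b : Bool)
  | c (j : Fin (q / 4 - 1)) (b : Bool)
  | c' (j : Fin (q / 4 - 1)) (b : Bool)
  deriving DecidableEq, Fintype

/-- The target matrix of the example: hospitals are `Bool`, with `true` being `h` and
`false` being `h'`.  The `s`-singles and `c`-couples demand `h` with probability 1, the
`s'`-singles and `c'`-couples demand `h'` with probability 1, and the couple `c*` demands
each hospital with probability `1/2`. -/
noncomputable def exM (q : ℕ) : ExIntern q → Bool → ℝ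
  | .s _, b => if b then 1 else 0
  | .s' _, b => if b then 0 else 1
  | .cstar _, _ => 1 / 2
  | .c _ _, b => if b then 1 else 0
  | .c' _ _, b => if b then 0 else 1

/-- The set of single interns of the example. -/
def exS (q : ℕ) : Finset (ExIntern q) :=
  (Finset.univ.image ExIntern.s) ∪ (Finset.univ.image ExIntern.s')

/-- The set of couples of the example. -/
def exC (q : ℕ) : Finset (ExIntern q × ExIntern q) :=
  {(ExIntern.cstar false, ExIntern.cstar true)} ∪
    (Finset.univ.image fun j => (ExIntern.c j false, ExIntern.c j true)) ∪
    (Finset.univ.image fun j => (ExIntern.c' j false, ExIntern.c' j true))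

/-!
Couples fill a hospital two places at a time, so in every deterministic assignment the number of
singles placed at `h` has the parity of its capacity `q`, which is even. There are `q / 2 + 1`
singles demanding `h`, an odd number, so at least one of the `q + 2` singles is placed at the
wrong hospital. A single whose target row is a point mass and which is sent elsewhere with
probability `p` has error `2 p`; hence the errors of the singles add up to at least `2`, and one
of them is at least `2 / (q + 2)`.
-/

section CouplesProblem

variable {I H : Type*} [Fintype I] [Fintype H] {S : Finset I} {C : Finset (I × I)}
  {M : I → H → ℝ}

theorem IsCouplesProblem.sum_eq (hP : IsCouplesProblem S C M) (f : I → ℝ) :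
    ∑ i, f i = ∑ s ∈ S, f s + ∑ c ∈ C, (f c.1 + f c.2) := by
  classical
  obtain ⟨hcover, hsingle, hdisj, -⟩ := hP
  have hmembers : ∑ c ∈ C, (f c.1 + f c.2) = ∑ i ∈ C.biUnion (fun c => {c.1, c.2}), f i := by
    rw [sum_biUnion]
    · exact sum_congr rfl fun c hc => (sum_pair (hsingle c hc).2.2).symm
    · intro c hc c' hc' hne
      obtain ⟨h11, h12, h21, h22⟩ := hdisj c hc c' hc' hne
      simp [Ne.symm h11, Ne.symm h12, Ne.symm h21, Ne.symm h22]
  have hunion : S ∪ C.biUnion (fun c => {c.1, c.2}) = univ :=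
    eq_univ_of_forall fun i => by simpa [or_comm, eq_comm] using hcover i
  have hdisjoint : Disjoint S (C.biUnion fun c => {c.1, c.2}) :=
    (disjoint_biUnion_right _ _ _).2 fun c hc => by simp [(hsingle c hc).1, (hsingle c hc).2.1]
  rw [hmembers, ← sum_union hdisjoint, hunion]

theorem IsCouplesProblem.sum_eq_sum_add_two_mul (hP : IsCouplesProblem S C M) {f : I → ℝ}
    (hf : ∀ c ∈ C, f c.1 = f c.2) :
    ∑ i, f i = ∑ s ∈ S, f s + 2 * ∑ c ∈ C, f c.1 := by
  rw [hP.sum_eq, mul_sum]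
  congr 1
  exact sum_congr rfl fun c hc => by rw [← hf c hc, two_mul]

end CouplesProblem

theorem sum_eq_card_filter_eq_one {ι R : Type*} [AddCommMonoidWithOne R] [DecidableEq R]
    {s : Finset ι} {f : ι → R} (hf : ∀ i ∈ s, f i = 0 ∨ f i = 1) :
    ∑ i ∈ s, f i = #{i ∈ s | f i = 1} := by
  rw [← sum_boole]
  refine sum_congr rfl fun i hi => ?_
  rcases hf i hi with h | h <;> simp [h]

theorem sum_abs_pi_single_sub {H : Type*} [Fintype H] [DecidableEq H] {p : H → ℝ}
    (hp : ∀ h, 0 ≤ p h) (hsum : ∑ h, p h = 1) (t : H) :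
    ∑ h, |(Pi.single t 1 : H → ℝ) h - p h| = 2 * (1 - p t) := by
  have hrest : ∑ h ∈ univ.erase t, p h = 1 - p t := by
    rw [← hsum, ← add_sum_erase _ _ (mem_univ t), add_sub_cancel_left]
  have hpt : p t ≤ 1 := hsum ▸ single_le_sum (fun h _ => hp h) (mem_univ t)
  rw [← add_sum_erase _ _ (mem_univ t), Pi.single_eq_same, abs_of_nonneg (by linarith)]
  rw [sum_congr rfl fun h hh => by rw [Pi.single_eq_of_ne (ne_of_mem_erase hh), zero_sub, abs_neg,
    abs_of_nonneg (hp h)], hrest]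
  ring

/-- The approximation error of the convex combination is the maximum of this over `i`. -/
def internError {I H : Type*} [Fintype H] {K : ℕ} (M : I → H → ℝ) (lam : Fin K → ℝ)
    (Ms : Fin K → I → H → ℝ) (i : I) : ℝ :=
  ∑ h, |M i h - ∑ k, lam k * Ms k i h|

theorem internError_eq_of_eq_pi_single {I H : Type*} [Fintype I] [Fintype H] [DecidableEq H]
    {C : Finset (I × I)} {M : I → H → ℝ} {K : ℕ} {lam : Fin K → ℝ} {Ms : Fin K → I → H → ℝ}
    (hlam0 : ∀ k, 0 ≤ lam k) (hlam1 : ∑ k, lam k = 1)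
    (hMs : ∀ k, IsDeterministicAssignment C M (Ms k)) {i : I} {t : H} (hi : M i = Pi.single t 1) :
    internError M lam Ms i = 2 * ∑ k, lam k * (1 - Ms k i t) := by
  have hnonneg : ∀ h, 0 ≤ ∑ k, lam k * Ms k i h := fun h =>
    sum_nonneg fun k _ => mul_nonneg (hlam0 k) (by rcases (hMs k).1 i h with h | h <;> simp [h])
  have hsum : ∑ h, ∑ k, lam k * Ms k i h = 1 := by
    rw [sum_comm]
    simp_rw [← mul_sum, (hMs _).2.1 i, mul_one, hlam1]
  rw [internError, hi, sum_abs_pi_single_sub hnonneg hsum]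
  rw [sum_congr rfl fun k _ => mul_one_sub (lam k) _, sum_sub_distrib, hlam1]

namespace ExIntern

variable {q : ℕ}

theorem sum_exS {β : Type*} [AddCommMonoid β] (f : ExIntern q → β) :
    ∑ i ∈ exS q, f i = ∑ j, f (s j) + ∑ j, f (s' j) := by
  rw [exS, sum_union (by simp [disjoint_left]), sum_image fun _ _ _ _ => s.inj,
    sum_image fun _ _ _ _ => s'.inj]

theorem sum_exC {β : Type*} [AddCommMonoid β] (g : ExIntern q × ExIntern q → β) :
    ∑ c ∈ exC q, g c = g (cstar false, cstar true) + ∑ j, g (c j false, c j true) +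
      ∑ j, g (c' j false, c' j true) := by
  rw [exC, sum_union (by simp [disjoint_left]), sum_union (by simp),
    sum_singleton, sum_image fun _ _ _ _ h => (c.inj (Prod.ext_iff.1 h).1).1,
    sum_image fun _ _ _ _ h => (c'.inj (Prod.ext_iff.1 h).1).1]

theorem card_exS : #(exS q) = q / 2 + 1 + (q / 2 + 1) := by
  rw [card_eq_sum_ones, sum_exS]
  simp

theorem exM_s (j : Fin (q / 2 + 1)) : exM q (s j) = Pi.single true 1 := by
  ext b; cases b <;> rfl

theorem exM_s' (j : Fin (q / 2 + 1)) : exM q (s' j) = Pi.single false 1 := by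
  ext b; cases b <;> rfl

theorem sum_exS_exM (h : Bool) : ∑ i ∈ exS q, exM q i h = (q / 2 : ℕ) + 1 := by
  cases h <;> simp [sum_exS, exM]

theorem sum_exC_exM (h : Bool) : ∑ c ∈ exC q, exM q c.1 h = 1 / 2 + (q / 4 - 1 : ℕ) := by
  cases h <;> simp [sum_exC, exM]

theorem mem_exC {x : ExIntern q × ExIntern q} :
    x ∈ exC q ↔ x = (cstar false, cstar true) ∨ (∃ j, x = (c j false, c j true)) ∨
      ∃ j, x = (c' j false, c' j true) := by
  simp [exC, eq_comm]

theorem isCouplesProblem : IsCouplesProblem (exS q) (exC q) (exM q) := by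
  refine ⟨fun i => ?_, fun x hx => ?_, fun x hx y hy hne => ?_, fun i h => ?_, fun i => ?_,
    fun x hx h => ?_⟩
  · cases i with
    | s j => exact Or.inl (by simp [exS])
    | s' j => exact Or.inl (by simp [exS])
    | cstar b => exact Or.inr ⟨_, mem_exC.2 (Or.inl rfl), by cases b <;> simp⟩
    | c j b => exact Or.inr ⟨_, mem_exC.2 (Or.inr (Or.inl ⟨j, rfl⟩)), by cases b <;> simp⟩
    | c' j b => exact Or.inr ⟨_, mem_exC.2 (Or.inr (Or.inr ⟨j, rfl⟩)), by cases b <;> simp⟩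
  · rcases mem_exC.1 hx with rfl | ⟨j, rfl⟩ | ⟨j, rfl⟩ <;> simp [exS]
  · rcases mem_exC.1 hx with rfl | ⟨j, rfl⟩ | ⟨j, rfl⟩ <;>
      rcases mem_exC.1 hy with rfl | ⟨j', rfl⟩ | ⟨j', rfl⟩ <;> simp_all
  · cases i <;> cases h <;> norm_num [exM]
  · cases i <;> simp [exM]
  · rcases mem_exC.1 hx with rfl | ⟨j, rfl⟩ | ⟨j, rfl⟩ <;> rfl

theorem sum_exM (hq : 0 < q) (h4 : 4 ∣ q) (h : Bool) : ∑ i, exM q i h = q := by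
  have hcount : ((q / 2 : ℕ) : ℝ) + 1 + 2 * (q / 4 - 1 : ℕ) + 1 = q := by
    exact_mod_cast (by omega : q / 2 + 1 + 2 * (q / 4 - 1) + 1 = q)
  rw [isCouplesProblem.sum_eq_sum_add_two_mul fun x hx => isCouplesProblem.2.2.2.2.2 x hx h,
    sum_exS_exM, sum_exC_exM]
  linarith

theorem two_mul_sum_exC_exM_le (h : Bool) :
    2 * ∑ x ∈ exC q, exM q x.1 h ≤ ∑ i ∈ exS q, exM q i h := by
  have hcount : 2 * ((q / 4 - 1 : ℕ) : ℝ) ≤ (q / 2 : ℕ) := by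
    exact_mod_cast (by omega : 2 * (q / 4 - 1) ≤ q / 2)
  rw [sum_exS_exM, sum_exC_exM]
  linarith

theorem one_le_sum_misplaced_singles (hq : 0 < q) (h4 : 4 ∣ q) {M' : ExIntern q → Bool → ℝ}
    (hM' : IsDeterministicAssignment (exC q) (exM q) M') :
    1 ≤ ∑ j, (1 - M' (s j) true) + ∑ j, (1 - M' (s' j) false) := by
  obtain ⟨h01, hrow, hcouple, hcap⟩ := hM'
  have hs' : ∀ j, 1 - M' (s' j) false = M' (s' j) true := fun j => by
    linarith [Fintype.sum_bool (M' (s' j)) ▸ hrow (s' j)]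
  have hcol := isCouplesProblem.sum_eq_sum_add_two_mul (f := (M' · true))
    fun x hx => hcouple x hx true
  rw [hcap, sum_exM hq h4, sum_exS] at hcol
  rw [sum_congr rfl fun j _ => hs' j, sum_sub_distrib, sum_const, card_univ, Fintype.card_fin,
    nsmul_one]
  rw [sum_eq_card_filter_eq_one fun j _ => h01 (s j) true,
    sum_eq_card_filter_eq_one fun j _ => h01 (s' j) true] at hcol ⊢
  rw [sum_eq_card_filter_eq_one fun x _ => h01 x.1 true] at hcol
  have hle : #{j | M' (s j) true = 1} ≤ q / 2 + 1 := (card_filter_le _ _).trans (by simp)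
  generalize #{j | M' (s j) true = 1} = a at hcol hle ⊢
  generalize #{j | M' (s' j) true = 1} = b at hcol ⊢
  generalize #{x ∈ exC q | M' x.1 true = 1} = n at hcol
  have hab : a ≤ q / 2 + b := by
    have : q = a + b + 2 * n := by exact_mod_cast hcol
    omega
  have : (a : ℝ) ≤ (q / 2 : ℕ) + b := by exact_mod_cast hab
  push_cast
  linarith

theorem two_le_sum_internError (hq : 0 < q) (h4 : 4 ∣ q) {K : ℕ} {lam : Fin K → ℝ}
    {Ms : Fin K → ExIntern q → Bool → ℝ} (hlam0 : ∀ k, 0 ≤ lam k) (hlam1 : ∑ k, lam k = 1)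
    (hMs : ∀ k, IsDeterministicAssignment (exC q) (exM q) (Ms k)) :
    2 ≤ ∑ i ∈ exS q, internError (exM q) lam Ms i := by
  rw [sum_exS]
  simp only [internError_eq_of_eq_pi_single hlam0 hlam1 hMs (exM_s _),
    internError_eq_of_eq_pi_single hlam0 hlam1 hMs (exM_s' _)]
  calc (2 : ℝ) = 2 * ∑ k, lam k * 1 := by simp [hlam1]
    _ ≤ 2 * ∑ k, lam k * (∑ j, (1 - Ms k (s j) true) + ∑ j, (1 - Ms k (s' j) false)) := by
      gcongr with k
      · exact hlam0 k
      · exact one_le_sum_misplaced_singles hq h4 (hMs k)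
    _ = _ := by
      simp only [mul_add, mul_sum, sum_add_distrib]
      rw [sum_comm, sum_comm (γ := Fin K)]

end ExIntern

theorem lower_bound_example (q : ℕ) (hq : 0 < q) (h4 : 4 ∣ q) :
    (∀ h : Bool, ∑ i : ExIntern q, exM q i h = q) ∧
    IsCouplesProblem (exS q) (exC q) (exM q) ∧
    (∀ h : Bool, 2 * ∑ c ∈ exC q, exM q c.1 h ≤ ∑ s ∈ exS q, exM q s h) ∧
    ∀ (K : ℕ) (lam : Fin K → ℝ) (Ms : Fin K → ExIntern q → Bool → ℝ),
      (∀ k, 0 ≤ lam k) → ∑ k, lam k = 1 →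
      (∀ k, IsDeterministicAssignment (exC q) (exM q) (Ms k)) →
      ∃ i : ExIntern q,
        2 / ((q : ℝ) + 2) ≤ ∑ h : Bool, |exM q i h - ∑ k, lam k * Ms k i h| := by
  refine ⟨ExIntern.sum_exM hq h4, ExIntern.isCouplesProblem, ExIntern.two_mul_sum_exC_exM_le,
    fun K lam Ms hlam0 hlam1 hMs => ?_⟩
  have hcard : ((#(exS q) : ℕ) : ℝ) = q + 2 := by
    rw [ExIntern.card_exS]
    exact_mod_cast (by omega : q / 2 + 1 + (q / 2 + 1) = q + 2)
  obtain ⟨i, -, hi⟩ := exists_le_of_sum_le (s := exS q) (f := fun _ => 2 / ((q : ℝ) + 2))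
    (g := internError (exM q) lam Ms) (card_pos.1 (by simp [ExIntern.card_exS])) <| by
      rw [sum_const, nsmul_eq_mul, hcard, mul_div_cancel₀ _ (by positivity)]
      exact ExIntern.two_le_sum_internError hq h4 hlam0 hlam1 hMs
  exact ⟨i, hi⟩
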